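/- Let d ≥ 2 and let X, Y ⊆ 𝕋 be rotation sets for m_d. If X and Y have the same collection of major gaps, i.e. the set of connected components of 𝕋∖X of length ≥ 1/d equals the set of connected components of 𝕋∖Y of length ≥ 1/d, then X = Y. In other words, a rotation set is uniquely determined by its major gaps. -/

import Mathlib

/-! Points of a rotation set `X` stay in `X` under `m_d`, so their orbits never meet a gap of `X`.
Conversely, a point outside `X` lies in a gap. Because `m_d|_X` extends to a monotone degree-one
map, `m_d` carries every gap of length `< 1 / d` onto a gap `d` times as long, so the orbit of the
point eventually enters a major gap. Hence `X` is the set of points whose orbits avoid the major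
gaps of `X`. -/

open Set MeasureTheory ENNReal

noncomputable section

instance : Fact ((0:ℝ) < 1) := ⟨one_pos⟩

/-- The circle `ℝ/ℤ`. -/
abbrev Circle1 : Type := AddCircle (1 : ℝ)

/-- The multiplication-by-`d` map `m_d` on the circle. -/
def md (d : ℕ) : Circle1 → Circle1 := fun t => d • t

/-- `G : ℝ → ℝ` (monotone, commuting with `x ↦ x + 1`) is a lift of the circle map `g`. -/
def IsLift (g : Circle1 → Circle1) (G : CircleDeg1Lift) : Prop :=
  ∀ x : ℝ, g ((x : ℝ) : Circle1) = ((G x : ℝ) : Circle1)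

/-- `g` is a monotone degree-one circle map. -/
def IsMonotoneDeg1 (g : Circle1 → Circle1) : Prop :=
  ∃ G : CircleDeg1Lift, IsLift g G

/-- `ρ` is the rotation number of the monotone degree-one circle map `g`:
the residue class mod `ℤ` of the translation number of a lift of `g`. -/
def HasRotationNumber (g : Circle1 → Circle1) (ρ : Circle1) : Prop :=
  ∃ G : CircleDeg1Lift, IsLift g G ∧ ρ = ((G.translationNumber : ℝ) : Circle1)

/-- `X` is a rotation set for `m_d`. -/
def IsRotationSet (d : ℕ) (X : Set Circle1) : Prop :=
  X.Nonempty ∧ IsCompact X ∧ md d '' X = X ∧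
    ∃ g : Circle1 → Circle1, IsMonotoneDeg1 g ∧ ∀ t ∈ X, g t = md d t

/-- `X` is a rotation set for `m_d` with rotation number `ρ`. -/
def IsRotationSetWith (d : ℕ) (X : Set Circle1) (ρ : Circle1) : Prop :=
  X.Nonempty ∧ IsCompact X ∧ md d '' X = X ∧
    ∃ g : Circle1 → Circle1, (∀ t ∈ X, g t = md d t) ∧ HasRotationNumber g ρ

/-- A gap of `X` is a connected component of the complement of `X`. -/
def IsGap (X : Set Circle1) (I : Set Circle1) : Prop :=
  ∃ t ∈ Xᶜ, I = connectedComponentIn Xᶜ t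

/-- `C` is a periodic orbit (cycle) of `m_d`. -/
def IsPeriodicOrbit (d : ℕ) (C : Set Circle1) : Prop :=
  ∃ (t : Circle1) (n : ℕ), 0 < n ∧ (md d)^[n] t = t ∧
    C = Set.range (fun k : Fin n => (md d)^[(k : ℕ)] t)

/-- The number of points of `X` whose representative in `[0,1)` lies in `[0,1/2)`. -/
def s1 (X : Set Circle1) : ℕ :=
  {t ∈ X | ((AddCircle.equivIco 1 0 t : ℝ) < 1 / 2)}.ncard

lemma coe_eq_coe_iff_exists_int {x y : ℝ} : (x : Circle1) = y ↔ ∃ k : ℤ, y = x + k := by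
  rw [QuotientAddGroup.eq, AddSubgroup.mem_zmultiples_iff]
  simp only [zsmul_eq_mul, mul_one]
  exact exists_congr fun k => by constructor <;> intro h <;> linarith

lemma coe_ne_coe_of_lt_of_lt_add_one {x y : ℝ} (h₁ : x < y) (h₂ : y < x + 1) :
    (x : Circle1) ≠ y := fun h =>
  h₁.ne ((AddCircle.coe_eq_coe_iff_of_mem_Ico ⟨le_rfl, by linarith⟩ ⟨h₁.le, h₂⟩).1 h)

lemma md_coe (d : ℕ) (s : ℝ) : md d (s : Circle1) = ((d * s : ℝ) : Circle1) := by
  rw [md, ← AddCircle.coe_nsmul, nsmul_eq_mul]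

lemma md_iterate_coe (d n : ℕ) (s : ℝ) :
    (md d)^[n] (s : Circle1) = (((d : ℝ) ^ n * s : ℝ) : Circle1) := by
  induction n generalizing s with
  | zero => simp
  | succ n ih => rw [Function.iterate_succ_apply, md_coe, ih, pow_succ, mul_assoc]

lemma volume_coe_image_Ioo {a b : ℝ} (hba : b ≤ a + 1) :
    volume (((↑) : ℝ → Circle1) '' Ioo a b) = ENNReal.ofReal (b - a) := by
  have hmeas : MeasurableSet (((↑) : ℝ → Circle1) '' Ioo a b) :=
    (QuotientAddGroup.isOpenMap_coe _ isOpen_Ioo).measurableSet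
  rw [AddCircle.add_projection_respects_measure 1 a hmeas, ← Real.volume_Ioo]
  congr 1
  ext y
  constructor
  · rintro ⟨⟨z, hz, hzy⟩, hy⟩
    have hz' : z ∈ Ioc a (a + 1) := ⟨hz.1, hz.2.le.trans hba⟩
    rwa [← (AddCircle.coe_eq_coe_iff_of_mem_Ioc hz' hy).1 hzy]
  · exact fun hy => ⟨mem_image_of_mem _ hy, hy.1, hy.2.le.trans hba⟩

lemma IsGap.subset_compl {X I : Set Circle1} (h : IsGap X I) : I ⊆ Xᶜ := by
  obtain ⟨t, -, rfl⟩ := h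
  exact connectedComponentIn_subset _ _

structure IsGapInterval (X : Set Circle1) (a b : ℝ) : Prop where
  lt : a < b
  left_mem : (a : Circle1) ∈ X
  right_mem : (b : Circle1) ∈ X
  notMem : ∀ y ∈ Ioo a b, (y : Circle1) ∉ X

namespace IsGapInterval

variable {X : Set Circle1} {a b : ℝ}

lemma le_add_one (h : IsGapInterval X a b) : b ≤ a + 1 := by
  by_contra! hb
  exact h.notMem (a + 1) ⟨by linarith, hb⟩ (by rw [AddCircle.coe_add_period]; exact h.left_mem)

lemma exists_coe_eq_mem_Icc (h : IsGapInterval X a b) {t : Circle1} (ht : t ∈ X) :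
    ∃ x ∈ Icc b (a + 1), (x : Circle1) = t := by
  obtain ⟨x, hx, rfl⟩ : t ∈ ((↑) : ℝ → Circle1) '' Ioc a (a + 1) := by
    rw [AddCircle.coe_image_Ioc_eq]; trivial
  exact ⟨x, ⟨not_lt.1 fun hxb => h.notMem x ⟨hx.1, hxb⟩ ht, hx.2⟩, rfl⟩

lemma connectedComponentIn_compl (hX : IsClosed X) (h : IsGapInterval X a b) {s : ℝ}
    (hs : s ∈ Ioo a b) :
    connectedComponentIn Xᶜ (s : Circle1) = ((↑) : ℝ → Circle1) '' Ioo a b := by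
  set S : Set Circle1 := ((↑) : ℝ → Circle1) '' Ioo a b
  have hSX : S ⊆ Xᶜ := by
    rintro _ ⟨z, hz, rfl⟩
    exact h.notMem z hz
  have hsS : (s : Circle1) ∈ S := mem_image_of_mem _ hs
  refine le_antisymm ?_ ((isPreconnected_Ioo.image _
    (AddCircle.continuous_mk' 1).continuousOn).subset_connectedComponentIn hsS hSX)
  -- `S` is clopen in `Xᶜ`: its closure adds only the two endpoints, which lie in `X`.
  have hclosure : closure S ⊆ ((↑) : ℝ → Circle1) '' Icc a b :=
    closure_minimal (image_mono Ioo_subset_Icc_self)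
      (isCompact_Icc.image (AddCircle.continuous_mk' 1)).isClosed
  have hcover : Xᶜ ⊆ S ∪ (Xᶜ \ closure S) := by
    intro z hz
    by_cases hzS : z ∈ closure S
    · obtain ⟨w, hw, rfl⟩ := hclosure hzS
      rcases hw.1.eq_or_lt with rfl | haw
      · exact absurd h.left_mem hz
      rcases hw.2.eq_or_lt with rfl | hwb
      · exact absurd h.right_mem hz
      exact Or.inl (mem_image_of_mem _ ⟨haw, hwb⟩)
    · exact Or.inr ⟨hz, hzS⟩
  exact isPreconnected_connectedComponentIn.subset_left_of_subset_union
    (QuotientAddGroup.isOpenMap_coe _ isOpen_Ioo) (hX.isOpen_compl.sdiff isClosed_closure)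
    (disjoint_left.2 fun _ hz hz' => hz'.2 (subset_closure hz))
    ((connectedComponentIn_subset _ _).trans hcover)
    ⟨_, mem_connectedComponentIn (hSX hsS), hsS⟩

lemma isGap (hX : IsClosed X) (h : IsGapInterval X a b) :
    IsGap X (((↑) : ℝ → Circle1) '' Ioo a b) := by
  obtain ⟨s, hs⟩ := exists_between h.lt
  exact ⟨s, h.notMem s hs, (h.connectedComponentIn_compl hX hs).symm⟩

end IsGapInterval

lemma exists_isGapInterval_mem_Ioo {X : Set Circle1} (hne : X.Nonempty) (hX : IsClosed X) {s : ℝ}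
    (hs : (s : Circle1) ∉ X) : ∃ a b, IsGapInterval X a b ∧ s ∈ Ioo a b := by
  set L : Set ℝ := (↑) ⁻¹' X
  have hL : IsClosed L := hX.preimage (AddCircle.continuous_mk' 1)
  obtain ⟨x₀, hx₀, hx₀L⟩ : ∃ x₀ ∈ Ioc (s - 1) (s - 1 + 1), x₀ ∈ L := by
    obtain ⟨t, ht⟩ := hne
    obtain ⟨x₀, hx₀, rfl⟩ : t ∈ ((↑) : ℝ → Circle1) '' Ioc (s - 1) (s - 1 + 1) := by
      rw [AddCircle.coe_image_Ioc_eq]; trivial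
    exact ⟨x₀, hx₀, ht⟩
  have hbddA : BddAbove (L ∩ Iic s) := ⟨s, fun _ hy => hy.2⟩
  have ha := (hL.inter isClosed_Iic).csSup_mem ⟨x₀, hx₀L, mem_Iic.2 (by linarith [hx₀.2])⟩ hbddA
  set a := sSup (L ∩ Iic s)
  have hx₀a : x₀ ≤ a := le_csSup hbddA ⟨hx₀L, mem_Iic.2 (by linarith [hx₀.2])⟩
  have ha₁ : a + 1 ∈ L ∩ Ici s := by
    refine ⟨?_, mem_Ici.2 (by linarith [hx₀.1])⟩
    simpa only [L, mem_preimage, AddCircle.coe_add_period] using ha.1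
  have hbddB : BddBelow (L ∩ Ici s) := ⟨s, fun _ hy => hy.2⟩
  have hb := (hL.inter isClosed_Ici).csInf_mem ⟨_, ha₁⟩ hbddB
  set b := sInf (L ∩ Ici s)
  have has : a < s := ha.2.lt_of_ne fun h => hs (h ▸ ha.1)
  have hsb : s < b := hb.2.lt_of_ne' fun h => hs (h ▸ hb.1)
  refine ⟨a, b, ⟨has.trans hsb, ha.1, hb.1, fun y hy hyX => ?_⟩, has, hsb⟩
  rcases le_total y s with hys | hsy
  · exact (le_csSup hbddA ⟨hyX, hys⟩).not_gt hy.1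
  · exact (csInf_le hbddB ⟨hyX, hsy⟩).not_gt hy.2

section Dynamics

variable {d : ℕ} {X : Set Circle1} {G : CircleDeg1Lift}

lemma lift_apply_eq_add_mul_sub (hG : ∀ s : ℝ, (s : Circle1) ∈ X → (G s : Circle1) = md d s)
    {a b : ℝ} (ha : (a : Circle1) ∈ X) (hb : (b : Circle1) ∈ X) (hba : b ≤ a + 1)
    (hlen : d * (b - a) ∈ Ioo (0 : ℝ) 1) : G b = G a + d * (b - a) := by
  obtain ⟨ka, hka⟩ := coe_eq_coe_iff_exists_int.1 ((hG a ha).trans (md_coe d a)).symm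
  obtain ⟨kb, hkb⟩ := coe_eq_coe_iff_exists_int.1 ((hG b hb).trans (md_coe d b)).symm
  have hab : a ≤ b := by linarith [pos_of_mul_pos_right hlen.1 (Nat.cast_nonneg d)]
  have hGab : G a ≤ G b := G.monotone hab
  have hGba : G b ≤ G a + 1 := G.map_add_one a ▸ G.monotone hba
  -- `G b - G a ∈ [0, 1]` differs from `d * (b - a) ∈ (0, 1)` by an integer, which must vanish.
  have hk : kb - ka = 0 := by
    rw [← Int.abs_lt_one_iff, ← Int.cast_lt (R := ℝ), Int.cast_abs, abs_lt]
    push_cast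
    constructor <;> linarith [hlen.1, hlen.2]
  have : (kb : ℝ) = ka := by exact_mod_cast sub_eq_zero.1 hk
  rw [hka, hkb, this]
  ring

theorem IsGapInterval.mul_left {a b : ℝ} (hd : 0 < d) (hXd : md d '' X = X)
    (hG : ∀ s : ℝ, (s : Circle1) ∈ X → (G s : Circle1) = md d s) (h : IsGapInterval X a b)
    (hsmall : d * (b - a) < 1) : IsGapInterval X (d * a) (d * b) where
  lt := by have := h.lt; gcongr
  left_mem := hXd ▸ md_coe d a ▸ mem_image_of_mem _ h.left_mem
  right_mem := hXd ▸ md_coe d b ▸ mem_image_of_mem _ h.right_mem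
  notMem := by
    -- The monotone lift `G` carries `[a, b]` onto `[G a, G a + d(b - a)]` and the complementary
    -- arc `[b, a + 1]` into `[G b, G a + 1]`, which is disjoint from `(d a, d b)` modulo `1`.
    rintro y hy hyX
    obtain ⟨t, ht, hty⟩ := hXd.symm ▸ hyX
    obtain ⟨x, hx, rfl⟩ := h.exists_coe_eq_mem_Icc ht
    obtain ⟨k, hk⟩ := coe_eq_coe_iff_exists_int.1 ((hG a h.left_mem).trans (md_coe d a)).symm
    have hGb := lift_apply_eq_add_mul_sub hG h.left_mem h.right_mem h.le_add_one
      ⟨mul_pos (by exact_mod_cast hd) (sub_pos.2 h.lt), hsmall⟩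
    have hGx₁ : G b ≤ G x := G.monotone hx.1
    have hGx₂ : G x ≤ G a + 1 := G.map_add_one a ▸ G.monotone hx.2
    refine coe_ne_coe_of_lt_of_lt_add_one (x := y + k) (y := G x) ?_ ?_ ?_
    · linarith [hy.2]
    · linarith [hy.1]
    · rw [← coe_eq_coe_iff_exists_int.2 ⟨k, rfl⟩, hG x ht, hty]

theorem IsGapInterval.pow_mul_left {a b : ℝ} (hd : 0 < d) (hXd : md d '' X = X)
    (hG : ∀ s : ℝ, (s : Circle1) ∈ X → (G s : Circle1) = md d s) (h : IsGapInterval X a b)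
    (n : ℕ) (hsmall : ∀ m < n, (d : ℝ) ^ (m + 1) * (b - a) < 1) :
    IsGapInterval X (d ^ n * a) (d ^ n * b) := by
  induction n generalizing a b with
  | zero => simpa using h
  | succ n ih =>
    have h' := h.mul_left hd hXd hG (by simpa using hsmall 0 n.succ_pos)
    have := ih h' fun m hm => by
      simpa [pow_succ, mul_sub, mul_assoc] using hsmall (m + 1) (by omega)
    simpa [pow_succ, mul_assoc] using this

end Dynamics

def majorGaps (d : ℕ) (X : Set Circle1) : Set (Set Circle1) :=
  {I | IsGap X I ∧ 1 / (d : ℝ≥0∞) ≤ volume I}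

namespace IsRotationSet

variable {d : ℕ} {X : Set Circle1}

lemma exists_lift_eq_md (hX : IsRotationSet d X) :
    ∃ G : CircleDeg1Lift, ∀ s : ℝ, (s : Circle1) ∈ X → (G s : Circle1) = md d s := by
  obtain ⟨-, -, -, g, ⟨G, hGg⟩, hgX⟩ := hX
  exact ⟨G, fun s hs => by rw [← hGg, hgX _ hs]⟩

theorem exists_iterate_mem_majorGaps (hd : 1 < d) (hX : IsRotationSet d X) {t : Circle1}
    (ht : t ∉ X) : ∃ n, ∃ I ∈ majorGaps d X, (md d)^[n] t ∈ I := by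
  obtain ⟨G, hG⟩ := hX.exists_lift_eq_md
  have hXc := hX.2.1.isClosed
  obtain ⟨s, rfl⟩ := QuotientAddGroup.mk_surjective t
  obtain ⟨a, b, hgap, hs⟩ := exists_isGapInterval_mem_Ioo hX.1 hXc ht
  have hgrow : ∃ n : ℕ, 1 ≤ (d : ℝ) ^ (n + 1) * (b - a) := by
    obtain ⟨n, hn⟩ := pow_unbounded_of_one_lt (1 / (b - a)) (by exact_mod_cast hd : (1 : ℝ) < d)
    rw [div_lt_iff₀ (sub_pos.2 hgap.lt)] at hn
    refine ⟨n, hn.le.trans ?_⟩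
    gcongr
    · exact sub_nonneg.2 hgap.lt.le
    · exact_mod_cast hd.le
    · omega
  classical
  set n := Nat.find hgrow
  have hn := hgap.pow_mul_left (by omega) hX.2.2.1 hG n fun m hm => not_le.1 (Nat.find_min hgrow hm)
  refine ⟨n, _, ⟨hn.isGap hXc, ?_⟩, ?_⟩
  · rw [volume_coe_image_Ioo hn.le_add_one, one_div, ← ENNReal.ofReal_natCast,
      ← ENNReal.ofReal_inv_of_pos (by positivity)]
    refine ENNReal.ofReal_le_ofReal ?_
    rw [inv_le_iff_one_le_mul₀ (by positivity)]
    exact (Nat.find_spec hgrow).trans_eq (by ring)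
  · rw [md_iterate_coe]
    exact mem_image_of_mem _ ⟨by gcongr; exact hs.1, by gcongr; exact hs.2⟩

theorem eq_setOf_forall_iterate_notMem_majorGaps (hd : 1 < d) (hX : IsRotationSet d X) :
    X = {t | ∀ n, ∀ I ∈ majorGaps d X, (md d)^[n] t ∉ I} := by
  ext t
  refine ⟨fun ht n I hI hnt => hI.1.subset_compl hnt ?_, fun ht => ?_⟩
  · exact ((hX.2.2.1 ▸ mapsTo_image (md d) X).iterate n) ht
  · by_contra htX
    obtain ⟨n, I, hI, hnt⟩ := hX.exists_iterate_mem_majorGaps hd htX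
    exact ht n I hI hnt

end IsRotationSet

/-- A rotation set is uniquely determined by its major gaps. -/
theorem rotation_set_determined_by_major_gaps
    (d : ℕ) (hd : 2 ≤ d) (X Y : Set Circle1)
    (hX : IsRotationSet d X) (hY : IsRotationSet d Y)
    (h : {I : Set Circle1 | IsGap X I ∧ 1 / (d : ℝ≥0∞) ≤ volume I} =
         {I : Set Circle1 | IsGap Y I ∧ 1 / (d : ℝ≥0∞) ≤ volume I}) :
    X = Y := by
  have h' : majorGaps d X = majorGaps d Y := h
  calc X = {t | ∀ n, ∀ I ∈ majorGaps d X, (md d)^[n] t ∉ I} :=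
        hX.eq_setOf_forall_iterate_notMem_majorGaps hd
    _ = {t | ∀ n, ∀ I ∈ majorGaps d Y, (md d)^[n] t ∉ I} := by rw [h']
    _ = Y := (hY.eq_setOf_forall_iterate_notMem_majorGaps hd).symm
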